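/- arXiv:2203.08662 — 2 statements merged into one kernel-verified Lean document; each statement's English description precedes it below -/
import Mathlib

section
/- Let X be a metrisable infinite-dimensional topological vector space with density character κ, and Y a linear subspace. Then the following are equivalent: (i) there is a dense linear subspace V of X with V ∩ Y = {0}; (ii) there is a linear subspace V of X of dimension κ with V ∩ Y = {0}; (iii) κ ≤ dim(X/Y). -/
open Filter Topology Set

/-- The density character of a topological space: the least cardinality of a dense subset. -/
noncomputable def densChar (X : Type*) [TopologicalSpace X] : Cardinal :=
  ⨅ s : {s : Set X // Dense s}, Cardinal.mk s.1

/-!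
If `V` is a dense subspace, it is infinite-dimensional (finite-dimensional subspaces are closed),
and the rational combinations of a basis of `V` are dense, so `dens X ≤ dim V`; if moreover
`V ∩ Y = 0`, then `V` embeds into `X ⧸ Y`.

Conversely, let `κ = dens X ≤ dim (X ⧸ Y)`. Index the pairs `(d, n)`, with `d` in a dense set of
size `κ` and `n` indexing a countable neighbourhood basis at `d`, by the initial ordinal of `κ`,
and choose by transfinite recursion a vector in the `n`-th neighbourhood of `d` outside `Y` plus
the span of the earlier choices. This is possible since `Y` plus a subspace of dimension `< κ` is
a proper subspace, hence has empty interior. The chosen vectors are independent modulo `Y`, so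
they span a dense subspace of dimension `κ` meeting `Y` trivially.
-/

open Cardinal Submodule

universe u

section DensityCharacter

variable {X : Type*} [TopologicalSpace X]

theorem densChar_le_mk_of_dense {s : Set X} (hs : Dense s) : densChar X ≤ #s :=
  ciInf_le (OrderBot.bddBelow _) (⟨s, hs⟩ : {s : Set X // Dense s})

variable (X)

theorem exists_dense_mk_eq_densChar : ∃ s : Set X, Dense s ∧ #s = densChar X := by
  have : Nonempty {s : Set X // Dense s} := ⟨⟨univ, dense_univ⟩⟩
  obtain ⟨⟨s, hs⟩, h⟩ := ciInf_mem fun s : {s : Set X // Dense s} => #s.1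
  exact ⟨s, hs, h⟩

theorem aleph0_le_densChar [T1Space X] [Infinite X] : ℵ₀ ≤ densChar X := by
  obtain ⟨D, hD, hDcard⟩ := exists_dense_mk_eq_densChar X
  rw [← hDcard, aleph0_le_mk_iff, infinite_coe_iff]
  intro hfin
  exact infinite_univ (hD.closure_eq ▸ hfin.isClosed.closure_eq ▸ hfin)

end DensityCharacter

section LinearAlgebra

variable {K M : Type*} [DivisionRing K] [AddCommGroup M] [Module K M]

theorem linearIndependent_of_notMem_span_image_Iio {σ : Type*} [LinearOrder σ] {v : σ → M}
    (hv : ∀ i, v i ∉ span K (v '' Iio i)) : LinearIndependent K v := by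
  classical
  refine linearIndependent_iff_finset_linearIndependent.mpr fun s => ?_
  induction s using Finset.induction_on_max with
  | empty => exact linearIndependent_empty_type
  | insert a s has ih =>
    show LinearIndepOn K v ↑(insert a s)
    rw [Finset.coe_insert, linearIndepOn_insert fun h => (has a h).false]
    exact ⟨ih, fun h => hv a (span_mono (image_mono fun x hx => has x hx) h)⟩

theorem linearIndependent_mkQ_of_notMem_sup_span_image_Iio {σ : Type*} [LinearOrder σ]
    (Y : Submodule K M) {v : σ → M} (hv : ∀ i, v i ∉ Y ⊔ span K (v '' Iio i)) :
    LinearIndependent K (Y.mkQ ∘ v) := by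
  refine linearIndependent_of_notMem_span_image_Iio fun i h => hv i ?_
  rwa [image_comp, span_image, Function.comp_apply, ← Submodule.mem_comap, comap_map_mkQ] at h

theorem rank_le_rank_quotient_of_disjoint {V Y : Submodule K M} (h : Disjoint V Y) :
    Module.rank K V ≤ Module.rank K (M ⧸ Y) := by
  refine LinearMap.rank_le_of_injective (Y.mkQ ∘ₗ V.subtype) ?_
  rw [← LinearMap.ker_eq_bot, LinearMap.ker_comp, ker_mkQ, ← disjoint_iff_comap_eq_bot]
  exact h

theorem sup_ne_top_of_rank_lt_rank_quotient {Y W : Submodule K M}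
    (h : Module.rank K W < Module.rank K (M ⧸ Y)) : Y ⊔ W ≠ ⊤ := by
  intro htop
  rw [← map_mkQ_eq_top] at htop
  refine not_lt_of_ge (rank_map_le Y.mkQ W) ?_
  rwa [htop, rank_top]

end LinearAlgebra

theorem WellFoundedLT.exists_transfinite_choice {σ α : Type*} [Preorder σ] [WellFoundedLT σ]
    (P : (i : σ) → (Iio i → α) → α → Prop) (h : ∀ i g, ∃ a, P i g a) :
    ∃ v : σ → α, ∀ i, P i (fun j => v j) (v i) := by
  choose F hF using h
  refine ⟨WellFoundedLT.fix fun i g => F i fun j => g j j.2, fun i => ?_⟩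
  rw [WellFoundedLT.fix_eq]
  exact hF _ _

section TopologicalVectorSpace

variable {X : Type u} [AddCommGroup X] [Module ℝ X]

noncomputable def ratCombinations (s : Set X) : AddSubmonoid X :=
  AddMonoidHom.mrange ((Finsupp.linearCombination ℝ ((↑) : s → X)).toAddMonoidHom.comp
    (Finsupp.mapRange.addMonoidHom (Rat.castHom ℝ).toAddMonoidHom))

theorem mk_ratCombinations_le {s : Set X} (hs : s.Infinite) : #(ratCombinations s) ≤ #s := by
  have := hs.to_subtype
  refine mk_range_le.trans ?_
  rw [mk_finsupp_lift_of_infinite, mk_eq_aleph0 ℚ, lift_aleph0, lift_uzero]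
  exact max_le le_rfl (aleph0_le_mk s)

variable [TopologicalSpace X]

theorem span_subset_closure_ratCombinations [ContinuousAdd X] [ContinuousSMul ℝ X] (s : Set X) :
    (span ℝ s : Set X) ⊆ closure (ratCombinations s) := by
  rintro _ hx
  obtain ⟨c, rfl⟩ := (Finsupp.mem_span_iff_linearCombination ℝ s _).mp hx
  clear hx
  rw [← AddSubmonoid.coe_topologicalClosure, SetLike.mem_coe]
  induction c using Finsupp.induction_linear with
  | zero => simp
  | add f g hf hg => rw [map_add]; exact add_mem hf hg
  | single i r =>
    rw [Finsupp.linearCombination_single]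
    have hcont : Continuous fun r : ℝ => r • (i : X) := continuous_id.smul continuous_const
    refine closure_mono ?_ (hcont.range_subset_closure_image_dense Rat.denseRange_cast ⟨r, rfl⟩)
    rintro _ ⟨_, ⟨q, rfl⟩, rfl⟩
    exact ⟨Finsupp.single i q, by simp⟩

theorem densChar_le_rank_of_dense [ContinuousAdd X] [ContinuousSMul ℝ X] {V : Submodule ℝ X}
    (hV : Dense (V : Set X)) (hrank : ℵ₀ ≤ Module.rank ℝ V) : densChar X ≤ Module.rank ℝ V := by
  obtain ⟨b, -, hspan, hb⟩ := exists_linearIndependent ℝ (V : Set X)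
  rw [span_eq] at hspan
  have hrank_eq : Module.rank ℝ V = #b := hspan ▸ rank_span_set hb
  have hdense : Dense (ratCombinations b : Set X) :=
    dense_closure.mp (hV.mono (hspan ▸ span_subset_closure_ratCombinations b))
  rw [hrank_eq] at hrank ⊢
  exact (densChar_le_mk_of_dense hdense).trans
    (mk_ratCombinations_le (infinite_coe_iff.mp (aleph0_le_mk_iff.mp hrank)))

theorem aleph0_le_rank_of_dense [IsTopologicalAddGroup X] [ContinuousSMul ℝ X] [T2Space X]
    (hX : ¬ Module.Finite ℝ X) {V : Submodule ℝ X} (hV : Dense (V : Set X)) :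
    ℵ₀ ≤ Module.rank ℝ V := by
  by_contra! hlt
  have : Module.Finite ℝ V := Module.rank_lt_aleph0_iff.mp hlt
  have hVtop : V = ⊤ := coe_eq_univ.mp (V.closed_of_finiteDimensional.closure_eq ▸ hV.closure_eq)
  rw [hVtop, rank_top] at hlt
  exact hX (Module.rank_lt_aleph0_iff.mp hlt)

theorem exists_mem_notMem_sup_of_rank_lt [ContinuousAdd X] [ContinuousSMul ℝ X]
    {Y W : Submodule ℝ X} (h : Module.rank ℝ W < Module.rank ℝ (X ⧸ Y)) {U : Set X}
    (hU : (interior U).Nonempty) : ∃ x ∈ U, x ∉ Y ⊔ W := by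
  have hYW : interior ((Y ⊔ W : Submodule ℝ X) : Set X) = ∅ :=
    not_nonempty_iff_eq_empty.mp fun hne =>
      sup_ne_top_of_rank_lt_rank_quotient h ((Y ⊔ W).eq_top_of_nonempty_interior' hne)
  obtain ⟨x, hxU, hx⟩ :=
    (interior_eq_empty_iff_dense_compl.mp hYW).inter_open_nonempty _ isOpen_interior hU
  exact ⟨x, interior_subset hxU, hx⟩

theorem exists_forall_mem_notMem_sup_span_image_Iio [ContinuousAdd X] [ContinuousSMul ℝ X]
    {σ : Type u} [LinearOrder σ] [WellFoundedLT σ] (Y : Submodule ℝ X) {U : σ → Set X}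
    (hU : ∀ i, (interior (U i)).Nonempty) (hσ : ∀ i : σ, #(Iio i) < Module.rank ℝ (X ⧸ Y)) :
    ∃ v : σ → X, ∀ i, v i ∈ U i ∧ v i ∉ Y ⊔ span ℝ (v '' Iio i) := by
  obtain ⟨v, hv⟩ := WellFoundedLT.exists_transfinite_choice
    (fun (i : σ) (g : Iio i → X) x => x ∈ U i ∧ x ∉ Y ⊔ span ℝ (range g)) fun i _ =>
      exists_mem_notMem_sup_of_rank_lt
        ((rank_span_le _).trans_lt (mk_range_le.trans_lt (hσ i))) (hU i)
  exact ⟨v, fun i => by simpa only [image_eq_range] using hv i⟩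

theorem exists_dense_disjoint_rank_eq_densChar [ContinuousAdd X] [ContinuousSMul ℝ X]
    [FirstCountableTopology X] (Y : Submodule ℝ X) (hκ : ℵ₀ ≤ densChar X)
    (h : densChar X ≤ Module.rank ℝ (X ⧸ Y)) :
    ∃ V : Submodule ℝ X, Dense (V : Set X) ∧ Module.rank ℝ V = densChar X ∧ Disjoint V Y := by
  obtain ⟨D, hD, hDcard⟩ := exists_dense_mk_eq_densChar X
  choose u hu using fun x : X => (𝓝 x).exists_antitone_basis
  obtain ⟨e⟩ : Nonempty ((densChar X).ord.ToType ≃ D × ℕ) := by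
    rw [← Cardinal.eq, mk_ord_toType, mk_prod, lift_uzero, mk_nat, lift_aleph0, hDcard,
      mul_aleph0_eq hκ]
  obtain ⟨v, hv⟩ := exists_forall_mem_notMem_sup_span_image_Iio Y
    (U := fun i => u (e i).1 (e i).2)
    (fun i => ⟨_, mem_interior_iff_mem_nhds.mpr ((hu _).mem (e i).2)⟩)
    (fun i => (mk_ord_toType (densChar X) ▸ mk_Iio_lt i (by simp)).trans_le h)
  have hindep := linearIndependent_mkQ_of_notMem_sup_span_image_Iio Y fun i => (hv i).2
  refine ⟨span ℝ (range v), ?_, ?_, ?_⟩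
  · refine dense_closure.mp (hD.mono fun d hd =>
      (mem_closure_iff_nhds_basis (hu d).toHasBasis).mpr fun n _ => ?_)
    refine ⟨v (e.symm (⟨d, hd⟩, n)), subset_span (mem_range_self _), ?_⟩
    simpa using (hv (e.symm (⟨d, hd⟩, n))).1
  · rw [rank_span hindep.of_comp, mk_range_eq v hindep.of_comp.injective, mk_ord_toType]
  · simpa using range_ker_disjoint hindep

end TopologicalVectorSpace

theorem stmt_6 (X : Type*) [AddCommGroup X] [Module ℝ X] [TopologicalSpace X]
    [IsTopologicalAddGroup X] [ContinuousSMul ℝ X] [TopologicalSpace.MetrizableSpace X]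
    (hinf : ¬ Module.Finite ℝ X) (Y : Submodule ℝ X) :
    ((∃ V : Submodule ℝ X, Dense (V : Set X) ∧ V ⊓ Y = ⊥) ↔
        densChar X ≤ Module.rank ℝ (X ⧸ Y)) ∧
    ((∃ V : Submodule ℝ X, Module.rank ℝ V = densChar X ∧ V ⊓ Y = ⊥) ↔
        densChar X ≤ Module.rank ℝ (X ⧸ Y)) := by
  have : Infinite X := not_finite_iff_infinite.mp fun _ => hinf Module.Finite.of_finite
  have hκ := aleph0_le_densChar X
  have hrank_le {V : Submodule ℝ X} (hVY : V ⊓ Y = ⊥) :=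
    rank_le_rank_quotient_of_disjoint (disjoint_iff.mpr hVY)
  refine ⟨⟨?_, fun h => ?_⟩, ⟨?_, fun h => ?_⟩⟩
  · rintro ⟨V, hV, hVY⟩
    exact (densChar_le_rank_of_dense hV (aleph0_le_rank_of_dense hinf hV)).trans (hrank_le hVY)
  · obtain ⟨V, hV, -, hVY⟩ := exists_dense_disjoint_rank_eq_densChar Y hκ h
    exact ⟨V, hV, disjoint_iff.mp hVY⟩
  · rintro ⟨V, hVrank, hVY⟩
    exact hVrank ▸ hrank_le hVY
  · obtain ⟨V, -, hVrank, hVY⟩ := exists_dense_disjoint_rank_eq_densChar Y hκ h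
    exact ⟨V, hVrank, disjoint_iff.mp hVY⟩
end

section
/- For all integers n ≥ 2 and d ≥ 0, the set L(n) ∪ L(n+1) ∪ ⋯ ∪ L(n+d) is (d+1)-lineable in ℓ∞ but not (d+2)-lineable: there exists a (d+1)-dimensional subspace V of ℓ∞ with every non-zero vector of V having between n and n+d accumulation points, but no such (d+2)-dimensional subspace exists. -/
/-!
If `X m ∈ ℝᵏ` collects the `m`-th terms of a basis of a `k`-dimensional subspace of `ℓ∞`, then
by compactness the accumulation points of the vector with coordinates `a` are exactly the values
`a ⬝ᵥ p`, `p` running over the cluster set `A` of `X`. So every nonzero functional takes between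
`n` and `n + d` values on the finite set `A`. A generic functional is injective on `A`, whence
`|A| ≤ n + d`. A nonzero functional constant on `min k |A|` points of `A` takes at most
`|A| - min k |A| + 1` values; as `n ≥ 2` this forces `k ≤ |A|` and `n + k - 1 ≤ |A|`.
Thus `k ≤ d + 1`.

Conversely, by dimension counting over an infinite field some `(d + 1)`-dimensional subspace of
`ℝ^(n + d)` meets none of the finitely many `(n - 1)`-dimensional subspaces of functions factoring
through `Fin (n - 1)`, so each of its nonzero vectors takes at least `n` values; repeating these
vectors periodically gives sequences whose accumulation points are exactly those values.
-/

open Filter Topology Set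

/-- The set of accumulation points of a real sequence. -/
def AccPts (x : ℕ → ℝ) : Set ℝ := {η | ∀ ε > 0, {n : ℕ | |x n - η| < ε}.Infinite}

/-- The Banach space `ℓ∞` of bounded real sequences. -/
noncomputable abbrev linf : Type := lp (fun _ : ℕ => ℝ) ⊤

open Module

theorem accPts_eq_setOf_mapClusterPt (x : ℕ → ℝ) :
    AccPts x = {η | MapClusterPt η atTop x} := by
  ext η
  simp only [AccPts, mem_ofPred_eq, Metric.nhds_basis_ball.mapClusterPt_iff_frequently,
    Nat.frequently_atTop_iff_infinite, Metric.mem_ball, Real.dist_eq]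

theorem MapClusterPt.exists_of_comp_of_isCompact {α X Y : Type*} [TopologicalSpace X]
    [TopologicalSpace Y] [T2Space Y] {F : Filter α} {u : α → X} {K : Set X} (hK : IsCompact K)
    (hu : ∀ᶠ a in F, u a ∈ K) {f : X → Y} (hf : Continuous f) {y : Y}
    (hy : MapClusterPt y F (f ∘ u)) : ∃ x, MapClusterPt x F u ∧ f x = y := by
  set G := comap (f ∘ u) (𝓝 y) ⊓ F
  have : G.NeBot := by
    rw [← map_neBot_iff (f ∘ u), Filter.push_pull']
    exact hy
  obtain ⟨x, -, hx⟩ := hK.exists_mapClusterPt (f := G) (u := u)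
    ((map_mono inf_le_right).trans (le_principal_iff.2 hu))
  refine ⟨x, hx.mono (map_mono inf_le_right), eq_of_nhds_neBot ?_⟩
  exact (hx.continuousAt_comp hf.continuousAt).clusterPt.mono
    (tendsto_comap.mono_left inf_le_left)

theorem accPts_comp_eq_image {E : Type*} [PseudoMetricSpace E] [ProperSpace E] {X : ℕ → E}
    (hX : Bornology.IsBounded (range X)) {f : E → ℝ} (hf : Continuous f) :
    AccPts (f ∘ X) = f '' {p | MapClusterPt p atTop X} := by
  ext η
  simp only [accPts_eq_setOf_mapClusterPt, mem_ofPred_eq, mem_image]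
  constructor
  · exact MapClusterPt.exists_of_comp_of_isCompact hX.isCompact_closure
      (Eventually.of_forall fun m => subset_closure (mem_range_self m)) hf
  · rintro ⟨p, hp, rfl⟩
    exact hp.continuousAt_comp hf.continuousAt

theorem accPts_comp_eq_range {ι : Type*} [Finite ι] (f : ι → ℝ) {e : ℕ → ι}
    (he : ∀ i, ∃ᶠ m in atTop, e m = i) : AccPts (f ∘ e) = range f := by
  ext η
  rw [accPts_eq_setOf_mapClusterPt, mem_ofPred_eq]
  constructor
  · intro hη
    exact (finite_range f).isClosed.mem_of_mapClusterPt hη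
      (Eventually.of_forall fun m => mem_range_self (e m))
  · rintro ⟨i, rfl⟩
    exact mapClusterPt_iff_frequently.2 fun s hs =>
      (he i).mono fun m hm => by simpa [hm] using mem_of_mem_nhds hs

section LinearAlgebra

variable {K E : Type*} [Field K] [AddCommGroup E] [Module K E]

theorem Submodule.exists_finrank_eq_forall_disjoint [Infinite K] [FiniteDimensional K E]
    {ι : Type*} [Finite ι] (p : ι → Submodule K E) {k : ℕ} (hk : k ≤ finrank K E)
    (hp : ∀ i, finrank K (p i) + k ≤ finrank K E) :
    ∃ W : Submodule K E, finrank K W = k ∧ ∀ i, Disjoint W (p i) := by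
  induction k with
  | zero => exact ⟨⊥, finrank_bot K E, fun i => disjoint_bot_left⟩
  | succ k ih =>
    obtain ⟨W, hW, hWp⟩ := ih (by omega) fun i => by have := hp i; omega
    have hproper : ∀ o : Option ι, o.elim W (fun i => W ⊔ p i) ≠ ⊤ := by
      rintro (_ | i) htop
      · rw [Option.elim_none] at htop
        rw [htop, finrank_top] at hW
        omega
      · rw [Option.elim_some] at htop
        have hle := Submodule.finrank_add_le_finrank_add_finrank W (p i)
        rw [htop, finrank_top] at hle
        have := hp i
        omega
    obtain ⟨v, hv⟩ := Submodule.exists_forall_notMem_of_forall_ne_top _ hproper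
    have hvW : v ∉ W := by simpa using hv none
    have hv0 : v ≠ 0 := fun h => hvW (h ▸ W.zero_mem)
    have hdisj : ∀ U : Submodule K E, v ∉ U → Disjoint (K ∙ v) U := fun U hU =>
      ((Submodule.disjoint_span_singleton' hv0).2 hU).symm
    refine ⟨K ∙ v ⊔ W, ?_, fun i => ?_⟩
    · have := Submodule.finrank_sup_add_finrank_inf_eq (K ∙ v) W
      rw [(hdisj W hvW).eq_bot, finrank_bot, finrank_span_singleton hv0] at this
      omega
    · exact (hWp i).disjoint_sup_left_of_disjoint_sup_right (hdisj _ (hv (some i)))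

theorem exists_fin_comp_eq_of_ncard_range_le {ι β : Type*} [Finite ι] [Zero β] (f : ι → β)
    {m : ℕ} (h : (range f).ncard ≤ m) : ∃ (c : ι → Fin m) (g : Fin m → β), g ∘ c = f := by
  have := Fintype.ofFinite (range f)
  have : Fintype.card (range f) ≤ Fintype.card (Fin m) := by
    rwa [Fintype.card_fin, ← Nat.card_eq_fintype_card, Nat.card_coe_set_eq]
  obtain ⟨e⟩ := Function.Embedding.nonempty_of_card_le this
  exact ⟨e ∘ rangeFactorization f, Function.extend e Subtype.val 0,
    funext fun i => e.injective.extend_apply _ _ _⟩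

variable (K) in
theorem exists_finrank_eq_forall_lt_ncard_range [Infinite K] (ι : Type*) [Fintype ι]
    {m k : ℕ} (h : m + k ≤ Fintype.card ι) :
    ∃ W : Submodule K (ι → K), finrank K W = k ∧ ∀ f ∈ W, f ≠ 0 → m < (range f).ncard := by
  obtain ⟨W, hW, hdisj⟩ := Submodule.exists_finrank_eq_forall_disjoint
    (fun c : ι → Fin m => LinearMap.range (LinearMap.funLeft K K c)) (k := k)
    (by rw [finrank_fintype_fun_eq_card]; omega) fun c => by
      have := LinearMap.finrank_range_le (LinearMap.funLeft K K c)
      rw [finrank_fintype_fun_eq_card] at this ⊢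
      simp only [Fintype.card_fin] at this
      omega
  refine ⟨W, hW, fun f hfW hf0 => ?_⟩
  by_contra! hle
  obtain ⟨c, g, rfl⟩ := exists_fin_comp_eq_of_ncard_range_le f hle
  exact hf0 (Submodule.disjoint_def.1 (hdisj c) _ hfW ⟨g, rfl⟩)

open Pointwise in
theorem Module.exists_dual_ne_zero_injOn [Infinite K] [Nontrivial E] {A : Set E}
    (hA : A.Finite) : ∃ φ : Dual K E, φ ≠ 0 ∧ InjOn φ A := by
  obtain ⟨v₀, hv₀⟩ := exists_ne (0 : E)
  set s := insert v₀ ((A - A) \ {0})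
  have : Finite s := ((hA.sub hA).sdiff.insert v₀).to_subtype
  obtain ⟨φ, hφ⟩ := Module.exists_dual_forall_apply_ne_zero (K := K) ((↑) : s → E) fun v => by
    rcases v.2 with h | h
    · rw [h]; exact hv₀
    · exact h.2
  refine ⟨φ, fun h => hφ ⟨v₀, mem_insert _ _⟩ (by simp [h]), fun a ha b hb hab => ?_⟩
  by_contra hne
  exact hφ ⟨a - b, mem_insert_of_mem _ ⟨sub_mem_sub ha hb, sub_ne_zero.2 hne⟩⟩ (by simp [hab])

theorem Module.exists_dual_ne_zero_forall_eq [FiniteDimensional K E] (t₀ : E) (T : Finset E)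
    (hT : T.card < finrank K E) : ∃ φ : Dual K E, φ ≠ 0 ∧ ∀ t ∈ T, φ t = φ t₀ := by
  classical
  obtain ⟨φ, hφ, hWφ⟩ := (Submodule.span K (T.image (· - t₀) : Set E)).exists_le_ker_of_lt_top
    (lt_top_iff_ne_top.2 fun h => by
      have := finrank_span_finset_le_card (R := K) (T.image (· - t₀))
      rw [Set.finrank, h, finrank_top] at this
      have := T.card_image_le (f := (· - t₀))
      omega)
  refine ⟨φ, hφ, fun t ht => ?_⟩
  simpa [sub_eq_zero] using hWφ (Submodule.subset_span (Finset.mem_image_of_mem _ ht))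

theorem Module.add_finrank_le_card_add_one_of_le_card_image [FiniteDimensional K E]
    [Nontrivial E] [DecidableEq K] (A : Finset E) {n : ℕ} (hn : 2 ≤ n)
    (h : ∀ φ : Dual K E, φ ≠ 0 → n ≤ (A.image φ).card) : n + finrank K E ≤ A.card + 1 := by
  classical
  obtain ⟨φ₀, hφ₀⟩ := exists_ne (0 : Dual K E)
  obtain ⟨t₀, ht₀⟩ : A.Nonempty := by
    have := h φ₀ hφ₀
    exact Finset.image_nonempty.1 (Finset.card_pos.1 (by omega : 0 < (A.image φ₀).card))
  have hpos := finrank_pos (R := K) (M := E)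
  obtain ⟨T, hTA, hT⟩ := Finset.exists_subset_card_eq
    (s := A.erase t₀) (n := min (finrank K E - 1) (A.card - 1))
    (by rw [Finset.card_erase_of_mem ht₀]; omega)
  obtain ⟨φ, hφ, hφT⟩ := exists_dual_ne_zero_forall_eq t₀ T (K := K) (by omega)
  have hsub : A.image φ ⊆ (A \ T).image φ := by
    intro y hy
    obtain ⟨t, ht, rfl⟩ := Finset.mem_image.1 hy
    by_cases htT : t ∈ T
    · rw [hφT t htT]
      exact Finset.mem_image_of_mem _ (Finset.mem_sdiff.2 ⟨ht₀, fun h => by simpa using hTA h⟩)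
    · exact Finset.mem_image_of_mem _ (Finset.mem_sdiff.2 ⟨ht, htT⟩)
  have hcard := (Finset.card_le_card hsub).trans Finset.card_image_le
  rw [Finset.card_sdiff_of_subset (hTA.trans (A.erase_subset t₀))] at hcard
  have := h φ hφ
  omega

theorem Set.Finite.of_forall_dual_finite_image [FiniteDimensional K E] {A : Set E}
    (h : ∀ φ : Dual K E, (φ '' A).Finite) : A.Finite := by
  let b := Module.finBasis K E
  refine ((Finite.pi fun j => h (b.coord j)).image b.equivFun.symm).subset fun p hp => ?_
  exact ⟨b.equivFun p, fun j _ => ⟨p, hp, rfl⟩, b.equivFun.symm_apply_apply p⟩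

end LinearAlgebra

noncomputable def linfComp {ι : Type*} [Finite ι] (e : ℕ → ι) : (ι → ℝ) →ₗ[ℝ] linf where
  toFun f := ⟨f ∘ e, memℓp_infty
    ((finite_range fun i => ‖f i‖).subset (range_comp_subset_range e _)).bddAbove⟩
  map_add' _ _ := rfl
  map_smul' _ _ := rfl

theorem linfComp_injective {ι : Type*} [Finite ι] {e : ℕ → ι} (he : e.Surjective) :
    Function.Injective (linfComp e) := fun _ _ hfg =>
  he.injective_comp_right (congrArg (fun x : linf => (x : ℕ → ℝ)) hfg)

theorem exists_submodule_linf_forall_accPts (n d : ℕ) (hn : 0 < n) :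
    ∃ V : Submodule ℝ linf, Module.finrank ℝ V = d + 1 ∧
      ∀ x ∈ V, x ≠ 0 → (AccPts ⇑x).Finite ∧
        n ≤ (AccPts ⇑x).ncard ∧ (AccPts ⇑x).ncard ≤ n + d := by
  obtain ⟨W, hW, hWf⟩ := exists_finrank_eq_forall_lt_ncard_range ℝ (Fin (n + d))
    (m := n - 1) (k := d + 1) (by simp only [Fintype.card_fin]; omega)
  let e : ℕ → Fin (n + d) := fun m => ⟨m % (n + d), Nat.mod_lt _ (by omega)⟩
  have he (i : Fin (n + d)) : ∃ᶠ m in atTop, e m = i := frequently_atTop.2 fun a =>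
    ⟨(n + d) * a + i, Nat.le_mul_of_pos_left a (by omega) |>.trans (Nat.le_add_right _ _),
      Fin.ext (by simp [e, Nat.mod_eq_of_lt i.isLt])⟩
  refine ⟨W.map (linfComp e), ?_, ?_⟩
  · rw [← hW]
    exact (Submodule.equivMapOfInjective _
      (linfComp_injective fun i => (he i).exists) W).finrank_eq.symm
  · rintro _ ⟨f, hfW, rfl⟩ hx
    have hf : f ≠ 0 := by rintro rfl; exact hx (map_zero _)
    change (AccPts (f ∘ e)).Finite ∧ n ≤ (AccPts (f ∘ e)).ncard ∧ (AccPts (f ∘ e)).ncard ≤ n + d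
    rw [accPts_comp_eq_range f he]
    have := hWf f hfW hf
    refine ⟨finite_range f, by omega, ?_⟩
    rw [← image_univ]
    exact (ncard_image_le finite_univ).trans (by simp)

theorem add_finrank_le_of_forall_accPts {E : Type*} [NormedAddCommGroup E] [NormedSpace ℝ E]
    [FiniteDimensional ℝ E] [Nontrivial E] {X : ℕ → E} (hX : Bornology.IsBounded (range X))
    {n M : ℕ} (hn : 2 ≤ n)
    (h : ∀ φ : Dual ℝ E, φ ≠ 0 → (AccPts (φ ∘ X)).Finite ∧
      n ≤ (AccPts (φ ∘ X)).ncard ∧ (AccPts (φ ∘ X)).ncard ≤ M) :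
    n + finrank ℝ E ≤ M + 1 := by
  classical
  set A := {p | MapClusterPt p atTop X}
  have hacc (φ : Dual ℝ E) : AccPts (φ ∘ X) = φ '' A :=
    accPts_comp_eq_image hX (LinearMap.continuous_of_finiteDimensional φ)
  have hA : A.Finite := Set.Finite.of_forall_dual_finite_image (K := ℝ) fun φ => by
    rcases eq_or_ne φ 0 with rfl | hφ
    · exact (finite_singleton 0).subset (by rintro _ ⟨p, -, rfl⟩; simp)
    · exact hacc φ ▸ (h φ hφ).1
  have hcard (φ : Dual ℝ E) : (hA.toFinset.image φ).card = (AccPts (φ ∘ X)).ncard := by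
    rw [hacc, ← ncard_coe_finset, Finset.coe_image, hA.coe_toFinset]
  have hlow := Module.add_finrank_le_card_add_one_of_le_card_image hA.toFinset hn fun φ hφ =>
    hcard φ ▸ (h φ hφ).2.1
  obtain ⟨φ, hφ, hinj⟩ := Module.exists_dual_ne_zero_injOn (K := ℝ) hA
  have := Finset.card_image_of_injOn (s := hA.toFinset) (hA.coe_toFinset ▸ hinj)
  have := (h φ hφ).2.2
  have := hcard φ
  omega

theorem not_exists_submodule_linf_forall_accPts (n d : ℕ) (hn : 2 ≤ n) :
    ¬ ∃ V : Submodule ℝ linf, Module.finrank ℝ V = d + 2 ∧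
      ∀ x ∈ V, x ≠ 0 → (AccPts ⇑x).Finite ∧
        n ≤ (AccPts ⇑x).ncard ∧ (AccPts ⇑x).ncard ≤ n + d := by
  rintro ⟨V, hV, hacc⟩
  have : Module.Free ℝ V := Module.Free.of_divisionRing ℝ V
  have : Module.Finite ℝ V := Module.finite_of_finrank_eq_succ hV
  let b := Module.finBasisOfFinrankEq ℝ V hV
  let X : ℕ → Fin (d + 2) → ℝ := fun m j => (b j : linf) m
  let x : Dual ℝ (Fin (d + 2) → ℝ) ≃ₗ[ℝ] V :=
    (dotProductEquiv ℝ (Fin (d + 2))).symm.trans b.equivFun.symm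
  have hx (φ : Dual ℝ (Fin (d + 2) → ℝ)) : ⇑(x φ : linf) = φ ∘ X := by
    have hφ : ⇑φ = ((dotProductEquiv ℝ _).symm φ ⬝ᵥ ·) := funext fun v => by
      conv_lhs => rw [← (dotProductEquiv ℝ _).apply_symm_apply φ]
      rfl
    ext m
    simp only [x, LinearEquiv.trans_apply, Basis.equivFun_symm_apply, Submodule.coe_sum,
      Submodule.coe_smul, lp.coeFn_sum, lp.coeFn_smul, Finset.sum_apply, Pi.smul_apply,
      smul_eq_mul, Function.comp_apply, hφ, dotProduct, X]
  have hX : Bornology.IsBounded (range X) := by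
    refine isBounded_iff_forall_norm_le.2 ⟨∑ j, ‖(b j : linf)‖, ?_⟩
    rintro _ ⟨m, rfl⟩
    refine pi_norm_le_iff_of_nonneg (by positivity) |>.2 fun j => ?_
    exact (lp.norm_apply_le_norm ENNReal.top_ne_zero _ m).trans
      (Finset.single_le_sum (f := fun j => ‖(b j : linf)‖) (fun j _ => norm_nonneg _)
        (Finset.mem_univ j))
  have := add_finrank_le_of_forall_accPts hX hn (M := n + d) fun φ hφ =>
    hx φ ▸ hacc _ (x φ).2 (by simpa using hφ)
  rw [Module.finrank_fin_fun] at this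
  omega

theorem stmt_14 (n d : ℕ) (hn : 2 ≤ n) :
    (∃ V : Submodule ℝ linf, Module.finrank ℝ V = d + 1 ∧
      ∀ x ∈ V, x ≠ 0 → (AccPts ⇑x).Finite ∧
        n ≤ (AccPts ⇑x).ncard ∧ (AccPts ⇑x).ncard ≤ n + d) ∧
    ¬ ∃ V : Submodule ℝ linf, Module.finrank ℝ V = d + 2 ∧
      ∀ x ∈ V, x ≠ 0 → (AccPts ⇑x).Finite ∧
        n ≤ (AccPts ⇑x).ncard ∧ (AccPts ⇑x).ncard ≤ n + d :=
  ⟨exists_submodule_linf_forall_accPts n d (by omega),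
    not_exists_submodule_linf_forall_accPts n d hn⟩
end
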